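/- For the map R₂, the real renormalization flow exhibits a phase transition exactly at y = 4: (i) for every real y with 1 ≤ y < 4, the iterates R₂⁽ⁿ⁾(y) converge to 1 as n → ∞; (ii) for every real y > 4, the iterates R₂⁽ⁿ⁾(y) form a strictly increasing sequence tending to +∞. Thus the two-dimensional 3-state Potts model on the diamond hierarchical lattice has a thermal critical point (Curie point) at Boltzmann factor y = 4 separating the disordered phase (flow to y* = 1) from the ordered phase (flow to y* = ∞). -/
import Mathlib


/-- The exact RG map of the 3-state Potts model on the two-dimensional
(`b = 2`) diamond hierarchical lattice, restricted to real Boltzmann factors. -/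
noncomputable def pottsR2Real (y : ℝ) : ℝ := ((y ^ 2 + 2) / (2 * y + 1)) ^ 2

lemma pottsR2_ge_one {y : ℝ} (hy : 1 ≤ y) : 1 ≤ pottsR2Real y := by
  have h : (0:ℝ) < 2 * y + 1 := by linarith
  have ht : 1 ≤ (y ^ 2 + 2) / (2 * y + 1) := by
    rw [le_div_iff₀ h]; nlinarith [sq_nonneg (y - 1)]
  unfold pottsR2Real
  nlinarith [ht]

lemma pottsR2_le_self {y : ℝ} (h1 : 1 ≤ y) (h4 : y ≤ 4) : pottsR2Real y ≤ y := by
  have h : (0:ℝ) < 2 * y + 1 := by linarith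
  unfold pottsR2Real
  rw [div_pow, div_le_iff₀ (by positivity)]
  have h3 : (0:ℝ) ≤ y ^ 3 - 1 := by nlinarith [mul_nonneg (by linarith : (0:ℝ) ≤ y - 1) (by positivity : (0:ℝ) ≤ y ^ 2 + y + 1)]
  nlinarith [mul_nonneg (by linarith : (0:ℝ) ≤ 4 - y) h3]

lemma pottsR2_gt_self {y : ℝ} (h : 4 < y) : y < pottsR2Real y := by
  have hpos : (0:ℝ) < 2 * y + 1 := by linarith
  unfold pottsR2Real
  rw [div_pow, lt_div_iff₀ (by positivity)]
  have h3 : (0:ℝ) < y ^ 3 - 1 := by nlinarith [mul_pos (by linarith : (0:ℝ) < y - 1) (by positivity : (0:ℝ) < y ^ 2 + y + 1)]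
  nlinarith [mul_pos (by linarith : (0:ℝ) < y - 4) h3]

lemma pottsR2_contAt {y : ℝ} (h : 1 ≤ y) : ContinuousAt pottsR2Real y := by
  have h0 : 2 * y + 1 ≠ 0 := by linarith
  have hc : ContinuousAt (fun x : ℝ => (x ^ 2 + 2) / (2 * x + 1)) y :=
    ContinuousAt.div (by fun_prop) (by fun_prop) h0
  unfold pottsR2Real
  exact hc.pow 2

lemma pottsR2_fixed {L : ℝ} (h1 : 1 ≤ L) (hfix : pottsR2Real L = L) :
    L = 1 ∨ L = 4 := by
  have h : (0:ℝ) < 2 * L + 1 := by linarith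
  have E : (L ^ 2 + 2) ^ 2 = L * (2 * L + 1) ^ 2 := by
    have := hfix
    unfold pottsR2Real at this
    rw [div_pow, div_eq_iff (by positivity)] at this
    linarith [this]
  have hE : (L - 4) * (L ^ 3 - 1) = 0 := by linear_combination E
  rcases mul_eq_zero.mp hE with h4 | h3
  · right; linarith
  · left
    have hL3 : L ^ 3 = 1 := by linarith
    nlinarith [sq_nonneg (L - 1)]

/-- The Curie point of the 2d Potts model on the diamond hierarchical lattice:
for `1 ≤ y < 4` the iterates of `R₂` converge to the high-temperature fixed
point `1`; for `y > 4` they increase strictly to `+∞` (the ordered phase). -/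
theorem stmt_18 :
    (∀ y : ℝ, 1 ≤ y → y < 4 →
      Filter.Tendsto (fun n : ℕ => pottsR2Real^[n] y) Filter.atTop (nhds 1)) ∧
    (∀ y : ℝ, 4 < y →
      StrictMono (fun n : ℕ => pottsR2Real^[n] y) ∧
      Filter.Tendsto (fun n : ℕ => pottsR2Real^[n] y) Filter.atTop Filter.atTop) := by
  constructor
  · intro y h1 h4
    set a : ℕ → ℝ := fun n => pottsR2Real^[n] y with ha
    have hrec : ∀ n, a (n + 1) = pottsR2Real (a n) := fun n =>
      Function.iterate_succ_apply' _ _ _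
    have hmem : ∀ n, 1 ≤ a n ∧ a n ≤ y := by
      intro n
      induction n with
      | zero => exact ⟨h1, le_rfl⟩
      | succ n ih =>
        rw [hrec]
        exact ⟨pottsR2_ge_one ih.1,
          le_trans (pottsR2_le_self ih.1 (by linarith [ih.2])) ih.2⟩
    have hanti : Antitone a := antitone_nat_of_succ_le fun n => by
      rw [hrec]
      exact pottsR2_le_self (hmem n).1 (by linarith [(hmem n).2])
    rcases tendsto_of_antitone hanti with hbot | ⟨L, hL⟩
    · exfalso
      obtain ⟨n, hn⟩ := (hbot.eventually (Filter.eventually_le_atBot 0)).exists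
      linarith [(hmem n).1]
    · have hL1 : 1 ≤ L := ge_of_tendsto hL (Filter.Eventually.of_forall fun n => (hmem n).1)
      have hLy : L ≤ y := le_of_tendsto hL (Filter.Eventually.of_forall fun n => (hmem n).2)
      have hfix : pottsR2Real L = L := by
        have h1' : Filter.Tendsto (fun n => a (n + 1)) Filter.atTop (nhds L) :=
          hL.comp (Filter.tendsto_add_atTop_nat 1)
        have h2' : Filter.Tendsto (fun n => pottsR2Real (a n)) Filter.atTop
            (nhds (pottsR2Real L)) := (pottsR2_contAt hL1).tendsto.comp hL
        have heq : (fun n => a (n + 1)) = fun n => pottsR2Real (a n) := funext hrec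
        rw [heq] at h1'
        exact tendsto_nhds_unique h2' h1'
      rcases pottsR2_fixed hL1 hfix with h | h
      · rwa [h] at hL
      · exfalso; linarith
  · intro y hy
    set a : ℕ → ℝ := fun n => pottsR2Real^[n] y with ha
    have hrec : ∀ n, a (n + 1) = pottsR2Real (a n) := fun n =>
      Function.iterate_succ_apply' _ _ _
    have hgt : ∀ n, 4 < a n := by
      intro n
      induction n with
      | zero => simpa [ha] using hy
      | succ n ih =>
        rw [hrec]
        exact lt_trans ih (pottsR2_gt_self ih)
    have hmono : StrictMono a := strictMono_nat_of_lt_succ fun n => by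
      rw [hrec]; exact pottsR2_gt_self (hgt n)
    refine ⟨hmono, ?_⟩
    rcases tendsto_of_monotone hmono.monotone with h | ⟨L, hL⟩
    · exact h
    · exfalso
      have hL4 : 4 < L := lt_of_lt_of_le (hgt 0) (hmono.monotone.ge_of_tendsto hL 0)
      have hfix : pottsR2Real L = L := by
        have h1' : Filter.Tendsto (fun n => a (n + 1)) Filter.atTop (nhds L) :=
          hL.comp (Filter.tendsto_add_atTop_nat 1)
        have h2' : Filter.Tendsto (fun n => pottsR2Real (a n)) Filter.atTop
            (nhds (pottsR2Real L)) := (pottsR2_contAt (by linarith)).tendsto.comp hL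
        have heq : (fun n => a (n + 1)) = fun n => pottsR2Real (a n) := funext hrec
        rw [heq] at h1'
        exact tendsto_nhds_unique h2' h1'
      rcases pottsR2_fixed (by linarith) hfix with h | h <;> linarith
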